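/- arXiv:2202.02839 — 4 statements merged into one kernel-verified Lean document; each statement's English description precedes it below -/
import Mathlib

section
/- Let H be a hypergraph of rank k and let H' be obtained from H by one step of codegree reduction where a set S of size s replaces all edges e ⊇ S of size ℓ > s whenever deg_ℓ(S, H) ≥ f(s, ℓ), and suppose f(s+1, ℓ) < f(s, ℓ). If H is triangle-free, then H' is triangle-free. More precisely: if H' contains a triangle using a newly created edge S (with S of size s, and at least f(s, ℓ) edges of H of size ℓ containing S, while the maximum (s+1, ℓ)-codegree of H is at most f(s+1, ℓ)), then H already contained a triangle. -/
/-!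
The triangle `S, fE, gE` of the reduced hypergraph has `w ∉ S`, so `S ∪ {w}` is an
`(s+1)`-set. Its `ℓ`-codegree is at most `f (s+1) ℓ < f s ℓ ≤ deg_ℓ(S, H)`, hence some
`ℓ`-edge `e ⊇ S` of `H` misses `w`, and `e, fE, gE` is a triangle of `H`.
-/

open Finset

/-- A triangle in a hypergraph. -/
def IsTriangle {V : Type*} [DecidableEq V] (H : Finset (Finset V)) : Prop :=
  ∃ e f g : Finset V, ∃ u v w : V,
    e ∈ H ∧ f ∈ H ∧ g ∈ H ∧ e ≠ f ∧ e ≠ g ∧ f ≠ g ∧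
    u ≠ v ∧ v ≠ w ∧ u ≠ w ∧
    u ∈ e ∧ v ∈ e ∧ v ∈ f ∧ w ∈ f ∧ w ∈ g ∧ u ∈ g ∧
    ({u, v, w} ∩ e ∩ f ∩ g : Finset V) = ∅

section

variable {V : Type*} [DecidableEq V]

lemma triangle_inter_eq_empty_iff {e f g : Finset V} {u v w : V}
    (hue : u ∈ e) (hve : v ∈ e) (hvf : v ∈ f) (hwf : w ∈ f) (hwg : w ∈ g) (hug : u ∈ g) :
    ({u, v, w} ∩ e ∩ f ∩ g : Finset V) = ∅ ↔ u ∉ f ∧ v ∉ g ∧ w ∉ e := by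
  constructor
  · intro h
    have hx : ∀ x, x ∉ ({u, v, w} ∩ e ∩ f ∩ g : Finset V) := eq_empty_iff_forall_notMem.mp h
    refine ⟨fun huf => hx u ?_, fun hvg => hx v ?_, fun hwe => hx w ?_⟩ <;> simp [*]
  · rintro ⟨huf, hvg, hwe⟩
    ext x
    simp only [mem_inter, mem_insert, mem_singleton, notMem_empty, iff_false]
    rintro ⟨⟨⟨rfl | rfl | rfl, hxe⟩, hxf⟩, hxg⟩
    exacts [huf hxf, hvg hxg, hwe hxe]

lemma isTriangle_of_notMem {H : Finset (Finset V)} {e f g : Finset V} {u v w : V}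
    (he : e ∈ H) (hf : f ∈ H) (hg : g ∈ H) (huv : u ≠ v) (hvw : v ≠ w) (huw : u ≠ w)
    (hue : u ∈ e) (hve : v ∈ e) (hvf : v ∈ f) (hwf : w ∈ f) (hwg : w ∈ g) (hug : u ∈ g)
    (huf : u ∉ f) (hvg : v ∉ g) (hwe : w ∉ e) :
    IsTriangle H :=
  ⟨e, f, g, u, v, w, he, hf, hg, fun h => huf (h ▸ hue), fun h => hwe (h ▸ hwg),
    fun h => hvg (h ▸ hvf), huv, hvw, huw, hue, hve, hvf, hwf, hwg, hug,
    (triangle_inter_eq_empty_iff hue hve hvf hwf hwg hug).mpr ⟨huf, hvg, hwe⟩⟩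

lemma exists_superset_notMem_of_card_filter_lt {H : Finset (Finset V)} {S : Finset V} {w : V}
    {p : Finset V → Prop} [DecidablePred p]
    (h : #(H.filter fun e => insert w S ⊆ e ∧ p e) < #(H.filter fun e => S ⊆ e ∧ p e)) :
    ∃ e ∈ H, S ⊆ e ∧ p e ∧ w ∉ e := by
  contrapose! h
  refine card_le_card fun e he => ?_
  simp only [mem_filter, insert_subset_iff] at he ⊢
  exact ⟨he.1, ⟨h e he.1 he.2.1 he.2.2, he.2.1⟩, he.2.2⟩

end

theorem triangle_of_reduced_triangle_general {V : Type*} [DecidableEq V]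
    (H : Finset (Finset V)) (S : Finset V) (s ℓ : ℕ) (f : ℕ → ℕ → ℕ)
    (hScard : S.card = s)
    (hdeg : f s ℓ ≤ (H.filter (fun e => S ⊆ e ∧ e.card = ℓ)).card)
    (hcodeg : ∀ S' : Finset V, S'.card = s + 1 →
      (H.filter (fun e => S' ⊆ e ∧ e.card = ℓ)).card ≤ f (s + 1) ℓ)
    (hf : f (s + 1) ℓ < f s ℓ)
    (fE gE : Finset V) (u v w : V)
    (hfE : fE ∈ H) (hgE : gE ∈ H)
    (huv : u ≠ v) (hvw : v ≠ w) (huw : u ≠ w)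
    (huS : u ∈ S) (hvS : v ∈ S) (hvf : v ∈ fE) (hwf : w ∈ fE)
    (hwg : w ∈ gE) (hug : u ∈ gE)
    (hempty : ({u, v, w} ∩ S ∩ fE ∩ gE : Finset V) = ∅) :
    IsTriangle H := by
  obtain ⟨huf, hvg, hwS⟩ := (triangle_inter_eq_empty_iff huS hvS hvf hwf hwg hug).mp hempty
  have hcard : (insert w S).card = s + 1 := by rw [card_insert_of_notMem hwS, hScard]
  obtain ⟨e, he, hSe, -, hwe⟩ := exists_superset_notMem_of_card_filter_lt
    ((hcodeg _ hcard).trans_lt (hf.trans_le hdeg))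
  exact isTriangle_of_notMem he hfE hgE huv hvw huw (hSe huS) (hSe hvS) hvf hwf hwg hug
    huf hvg hwe

/-- One step of codegree reduction preserves triangle-freeness.  Precisely: suppose a
newly created edge `S` of size `s` satisfies `deg_ℓ(S, H) ≥ f s ℓ`, while the maximum
`(s+1, ℓ)`-codegree of `H` is at most `f (s+1) ℓ < f s ℓ`.  If `S` together with two
edges `fE, gE` of `H` forms a triangle, then `H` already contained a triangle. -/
theorem triangle_of_reduced_triangle {V : Type*} [DecidableEq V]
    (H : Finset (Finset V)) (S : Finset V) (s ℓ : ℕ) (f : ℕ → ℕ → ℕ)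
    (hScard : S.card = s)
    (hdeg : f s ℓ ≤ (H.filter (fun e => S ⊆ e ∧ e.card = ℓ)).card)
    (hcodeg : ∀ S' : Finset V, S'.card = s + 1 →
      (H.filter (fun e => S' ⊆ e ∧ e.card = ℓ)).card ≤ f (s + 1) ℓ)
    (hf : f (s + 1) ℓ < f s ℓ)
    (fE gE : Finset V) (u v w : V)
    (hfE : fE ∈ H) (hgE : gE ∈ H)
    (hSf : S ≠ fE) (hSg : S ≠ gE) (hfg : fE ≠ gE)
    (huv : u ≠ v) (hvw : v ≠ w) (huw : u ≠ w)
    (huS : u ∈ S) (hvS : v ∈ S) (hvf : v ∈ fE) (hwf : w ∈ fE)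
    (hwg : w ∈ gE) (hug : u ∈ gE)
    (hempty : ({u, v, w} ∩ S ∩ fE ∩ gE : Finset V) = ∅) :
    IsTriangle H :=
  triangle_of_reduced_triangle_general H S s ℓ f hScard hdeg hcodeg hf fE gE u v w hfE hgE huv hvw
    huw huS hvS hvf hwf hwg hug hempty
end

section
/- Let H be a hypergraph in which no two distinct edges e₁, e₂ satisfy e₁ ⊊ e₂, and suppose H is triangle-free. Fix an edge e₀ and two distinct vertices v, v' ∈ e₀. If e, e' are edges with v ∈ e, v' ∈ e', v ∉ e', and e' = ((e − v) ∩ (e' − v')) ∪ {v'} (i.e., |e'| = |(e−v) ∩ (e'−v')| + 1), and e, e', e₀ are pairwise distinct, and (e−v) ∩ (e'−v') is not contained in e₀, then H contains a triangle — contradiction. Hence for any antichain triangle-free hypergraph, if (e,v) and (e',v') are distinct pointed edges with (e−v) ∩ (e'−v') ≠ ∅ and v, v' ∈ e₀ for some edge e₀, then |e'| > |(e−v) ∩ (e'−v')| + 1. -/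
/-
If `|e'| ≤ |(e − v) ∩ (e' − v')| + 1` then `e' = {v'} ∪ S` with `S = (e − v) ∩ (e' − v')`.
Any edge containing `v'` and `S` contains `e'`, hence equals it by the antichain condition.
Applied to `e` this forces `v ≠ v'` and then `v' ∉ e`; applied to `e₀` it gives a vertex
`w ∈ S` outside `e₀`. Since `v ∉ e'`, the edges `e₀, e', e` with the vertices `v, v', w`
form a triangle: each vertex misses the edge opposite to it.
-/

open Finset

section Triangle

variable {V : Type*} [DecidableEq V] {H : Finset (Finset V)} {a b c : Finset V} {x y z : V}

theorem isTriangle_of_notMem_s11 (ha : a ∈ H) (hb : b ∈ H) (hc : c ∈ H)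
    (hxa : x ∈ a) (hya : y ∈ a) (hyb : y ∈ b) (hzb : z ∈ b) (hzc : z ∈ c) (hxc : x ∈ c)
    (hxb : x ∉ b) (hyc : y ∉ c) (hza : z ∉ a) : IsTriangle H := by
  refine ⟨a, b, c, x, y, z, ha, hb, hc, ?_, ?_, ?_, ?_, ?_, ?_,
    hxa, hya, hyb, hzb, hzc, hxc, ?_⟩
  · rintro rfl; exact hxb hxa
  · rintro rfl; exact hza hzc
  · rintro rfl; exact hyc hyb
  · rintro rfl; exact hxb hyb
  · rintro rfl; exact hyc hzc
  · rintro rfl; exact hza hxa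
  · refine eq_empty_of_forall_notMem fun t ht => ?_
    simp only [mem_inter, mem_insert, mem_singleton] at ht
    obtain ⟨⟨⟨rfl | rfl | rfl, hta⟩, htb⟩, htc⟩ := ht
    exacts [hxb htb, hyc htc, hza hta]

end Triangle

theorem Finset.eq_insert_of_subset_erase_of_card_le {α : Type*} [DecidableEq α]
    {s t : Finset α} {a : α} (ha : a ∈ s) (hts : t ⊆ s.erase a) (hcard : #s ≤ #t + 1) :
    s = insert a t := by
  have hat : a ∉ t := fun h => notMem_erase a s (hts h)
  refine (eq_of_subset_of_card_le (insert_subset ha (hts.trans (erase_subset a s))) ?_).symm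
  rwa [card_insert_of_notMem hat]

theorem claim_dep_general {V : Type*} [DecidableEq V] (H : Finset (Finset V))
    (hanti : ∀ e₁ ∈ H, ∀ e₂ ∈ H, e₁ ⊆ e₂ → e₁ = e₂)
    (htf : ¬ IsTriangle H)
    (e₀ e e' : Finset V) (v v' : V)
    (he₀ : e₀ ∈ H) (he : e ∈ H) (he' : e' ∈ H)
    (hv : v ∈ e) (hv' : v' ∈ e')
    (hv0 : v ∈ e₀) (hv'0 : v' ∈ e₀)
    (hne : ¬ (e = e' ∧ v = v')) :
    ((e.erase v) ∩ (e'.erase v')).card + 1 < e'.card := by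
  by_contra! hle
  set S := (e.erase v) ∩ (e'.erase v')
  have hSe : S ⊆ e := inter_subset_left.trans (erase_subset v e)
  have hSe' : S ⊆ e' := inter_subset_right.trans (erase_subset v' e')
  have he'_eq : e' = insert v' S :=
    eq_insert_of_subset_erase_of_card_le hv' inter_subset_right hle
  have absorb : ∀ f ∈ H, v' ∈ f → S ⊆ f → e' = f := fun f hf hv'f hSf =>
    hanti e' he' f hf (he'_eq ▸ insert_subset hv'f hSf)
  have hvv' : v ≠ v' := fun h => hne ⟨(absorb e he (h ▸ hv) hSe).symm, h⟩
  have hve' : v ∉ e' := by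
    rw [he'_eq, mem_insert, not_or]
    exact ⟨hvv', fun h => notMem_erase v e (inter_subset_left h)⟩
  have hv'e : v' ∉ e := fun h => hve' (absorb e he h hSe ▸ hv)
  obtain ⟨w, hwS, hwe₀⟩ := not_subset.mp fun h => hve' (absorb e₀ he₀ hv'0 h ▸ hv0)
  exact htf (isTriangle_of_notMem_s11 he₀ he' he hv0 hv'0 hv' (hSe' hwS) (hSe hwS) hv hve' hv'e hwe₀)

/-- In a triangle-free hypergraph in which no edge strictly contains another, if
`(e, v)` and `(e', v')` are distinct pointed edges with `(e − v) ∩ (e' − v') ≠ ∅` and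
`v, v'` both lie in some edge `e₀`, then `|e'| > |(e − v) ∩ (e' − v')| + 1`. -/
theorem claim_dep {V : Type*} [DecidableEq V] (H : Finset (Finset V))
    (hanti : ∀ e₁ ∈ H, ∀ e₂ ∈ H, e₁ ⊆ e₂ → e₁ = e₂)
    (htf : ¬ IsTriangle H)
    (e₀ e e' : Finset V) (v v' : V)
    (he₀ : e₀ ∈ H) (he : e ∈ H) (he' : e' ∈ H)
    (hv : v ∈ e) (hv' : v' ∈ e')
    (hv0 : v ∈ e₀) (hv'0 : v' ∈ e₀)
    (hne : ¬ (e = e' ∧ v = v'))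
    (hint : ((e.erase v) ∩ (e'.erase v')).Nonempty) :
    ((e.erase v) ∩ (e'.erase v')).card + 1 < e'.card :=
  claim_dep_general H hanti htf e₀ e e' v v' he₀ he he' hv hv' hv0 hv'0 hne
end

section
/- Let {A_i}_{i∈I} be events in a finite product probability space, each of the form A_i = {A_i ⊆ R} for a random subset R with independent element inclusions, with P(A_i) ≤ ε < 1 for all i. Define Δ* = Σ_{i∼j} P(A_i ∧ A_j) over ordered pairs of dependent events, and M = Π_i P(¬A_i). Then M ≤ P(∧_i ¬A_i) ≤ M·exp(Δ*/(2(1−ε))). -/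
/-!
Both bounds are proved by adding the events one at a time.

The lower bound is Harris's inequality: the events `¬𝒜ᵢ` are decreasing, and decreasing events
are positively correlated under a product measure, whose weights satisfy
`w(B) w(C) = w(B ∩ C) w(B ∪ C)`, so the four functions theorem applies.

For the upper bound, add `i` to an index set `s`. Let `S` be the event that no `𝒜ⱼ`, `j ∈ s`,
occurs, `E ⊇ S` the event that none of those with `A j ∩ A i = ∅` occurs, and `D` the remaining
`j`. The event `E` is independent of `𝒜ᵢ`, and `𝒜ᵢ ∩ E` is covered by `𝒜ᵢ ∩ S` and the
`𝒜ᵢ ∩ 𝒜ⱼ ∩ E`, `j ∈ D`. Since `𝒜ᵢ ∩ 𝒜ⱼ` is increasing and `E` decreasing, Harris gives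
`P(𝒜ᵢ ∩ S) ≥ (P(𝒜ᵢ) - δᵢ) P(E) ≥ (P(𝒜ᵢ) - δᵢ) P(S)` with `δᵢ = ∑_{j ∈ D} P(𝒜ᵢ ∩ 𝒜ⱼ)` (when
the factor is negative, use `P(𝒜ᵢ ∩ S) ≥ 0` instead). Hence adding `i` multiplies `P(S)` by at
most `1 - P(𝒜ᵢ) + δᵢ ≤ (1 - P(𝒜ᵢ)) exp(δᵢ / (1 - ε))`, and each unordered dependent pair enters
one `δᵢ`, which accounts for `Δ* / 2`.
-/

open Finset
open scoped FinsetFamily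

lemma one_sub_add_le_mul_exp {q ε x : ℝ} (hqε : q ≤ ε) (hε1 : ε < 1) (hx : 0 ≤ x) :
    1 - q + x ≤ (1 - q) * Real.exp (x / (1 - ε)) := by
  have hε : 0 < 1 - ε := by linarith
  have hx' : x ≤ (1 - q) * (x / (1 - ε)) := by
    rw [mul_div_assoc', le_div_iff₀ hε]
    nlinarith
  calc 1 - q + x ≤ (1 - q) * (x / (1 - ε) + 1) := by linarith
    _ ≤ _ := mul_le_mul_of_nonneg_left (Real.add_one_le_exp _) (by linarith)

namespace RandomSubset

variable {Ω ι : Type*}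

section Probability

variable [Fintype Ω] [DecidableEq Ω] (p : Ω → ℝ)

/-- An outcome of the random set `R` is a `B : Finset Ω`, and an event is a family of outcomes;
`weight p B` is the probability that `R = B`. -/
def weight (B : Finset Ω) : ℝ :=
  (∏ v ∈ B, p v) * ∏ v ∈ Bᶜ, (1 - p v)

def prob (𝒜 : Finset (Finset Ω)) : ℝ :=
  ∑ B ∈ 𝒜, weight p B

def supersets (S : Finset Ω) : Finset (Finset Ω) :=
  univ.filter (S ⊆ ·)

def DeterminedOutside (𝒜 : Finset (Finset Ω)) (S : Finset Ω) : Prop :=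
  ∀ B, B ∈ 𝒜 ↔ B \ S ∈ 𝒜

variable {p}

lemma mem_supersets {S B : Finset Ω} : B ∈ supersets S ↔ S ⊆ B := by
  simp [supersets]

lemma isUpperSet_supersets (S : Finset Ω) : IsUpperSet (supersets S : Set (Finset Ω)) :=
  fun _ _ hBC hB => mem_supersets.2 ((mem_supersets.1 hB).trans hBC)

lemma weight_nonneg (hp0 : ∀ v, 0 ≤ p v) (hp1 : ∀ v, p v ≤ 1) (B : Finset Ω) :
    0 ≤ weight p B :=
  mul_nonneg (prod_nonneg fun v _ => hp0 v) (prod_nonneg fun v _ => sub_nonneg.2 (hp1 v))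

lemma weight_mul_weight (B C : Finset Ω) :
    weight p B * weight p C = weight p (B ∩ C) * weight p (B ∪ C) := by
  simp only [weight, compl_inter, compl_union]
  rw [mul_mul_mul_comm, ← prod_union_inter, ← prod_union_inter (s₁ := Bᶜ)]
  ring

lemma weight_erase_mul {a : Ω} {B : Finset Ω} (ha : a ∈ B) :
    weight p (B.erase a) * p a = weight p B * (1 - p a) := by
  rw [weight, weight, compl_erase, prod_insert (by simpa using ha), ← mul_prod_erase B p ha]
  ring

lemma prob_nonneg (hp0 : ∀ v, 0 ≤ p v) (hp1 : ∀ v, p v ≤ 1) (𝒜 : Finset (Finset Ω)) :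
    0 ≤ prob p 𝒜 :=
  sum_nonneg fun B _ => weight_nonneg hp0 hp1 B

lemma prob_mono (hp0 : ∀ v, 0 ≤ p v) (hp1 : ∀ v, p v ≤ 1) {𝒜 ℬ : Finset (Finset Ω)}
    (h : 𝒜 ⊆ ℬ) : prob p 𝒜 ≤ prob p ℬ :=
  sum_le_sum_of_subset_of_nonneg h fun B _ _ => weight_nonneg hp0 hp1 B

lemma prob_univ : prob p univ = 1 := by
  have h := prod_add p (fun v => 1 - p v) (univ : Finset Ω)
  simp only [add_sub_cancel, prod_const_one, powerset_univ, ← compl_eq_univ_sdiff] at h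
  exact h.symm

lemma prob_le_one (hp0 : ∀ v, 0 ≤ p v) (hp1 : ∀ v, p v ≤ 1) (𝒜 : Finset (Finset Ω)) :
    prob p 𝒜 ≤ 1 :=
  prob_univ (p := p) ▸ prob_mono hp0 hp1 (subset_univ 𝒜)

lemma prob_compl_inter (𝒜 ℬ : Finset (Finset Ω)) :
    prob p (𝒜ᶜ ∩ ℬ) = prob p ℬ - prob p (𝒜 ∩ ℬ) := by
  rw [prob, prob, prob, ← sum_inter_add_sum_sdiff ℬ 𝒜, sdiff_eq_inter_compl, inter_comm 𝒜ᶜ,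
    inter_comm 𝒜]
  ring

lemma prob_compl (𝒜 : Finset (Finset Ω)) : prob p 𝒜ᶜ = 1 - prob p 𝒜 := by
  simpa [prob_univ] using prob_compl_inter (p := p) 𝒜 univ

lemma prob_union_le (hp0 : ∀ v, 0 ≤ p v) (hp1 : ∀ v, p v ≤ 1) (𝒜 ℬ : Finset (Finset Ω)) :
    prob p (𝒜 ∪ ℬ) ≤ prob p 𝒜 + prob p ℬ := by
  rw [prob, prob, prob, ← sum_union_inter]
  exact le_add_of_nonneg_right (prob_nonneg hp0 hp1 _)

lemma prob_biUnion_le (hp0 : ∀ v, 0 ≤ p v) (hp1 : ∀ v, p v ≤ 1) (s : Finset ι)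
    (𝒜 : ι → Finset (Finset Ω)) : prob p (s.biUnion 𝒜) ≤ ∑ i ∈ s, prob p (𝒜 i) := by
  classical
  induction s using Finset.induction_on with
  | empty => simp [prob]
  | insert i s hi ih =>
    rw [biUnion_insert, sum_insert hi]
    exact (prob_union_le hp0 hp1 _ _).trans (add_le_add_right ih _)

lemma DeterminedOutside.mono {𝒜 : Finset (Finset Ω)} {S T : Finset Ω}
    (h : DeterminedOutside 𝒜 S) (hTS : T ⊆ S) : DeterminedOutside 𝒜 T := fun B => by
  rw [h B, h (B \ T), sdiff_sdiff_left, sup_eq_right.2 hTS]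

lemma DeterminedOutside.supersets_inter {𝒜 : Finset (Finset Ω)} {S T : Finset Ω}
    (h : DeterminedOutside 𝒜 T) (hST : Disjoint S T) :
    DeterminedOutside (supersets S ∩ 𝒜) T := fun B => by
  simp only [mem_inter, mem_supersets, subset_sdiff, hST, and_true, ← h B]

lemma prob_filter_mem {𝒜 : Finset (Finset Ω)} {a : Ω} (h : DeterminedOutside 𝒜 {a}) :
    prob p (𝒜.filter (a ∈ ·)) = p a * prob p 𝒜 := by
  simp only [DeterminedOutside, sdiff_singleton_eq_erase] at h
  have hpair : prob p (𝒜.filter (a ∈ ·)) * (1 - p a) = prob p (𝒜.filter (a ∉ ·)) * p a := by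
    simp only [prob, sum_mul]
    refine sum_nbij' (·.erase a) (insert a) ?_ ?_ ?_ ?_ ?_
    · intro B hB
      rw [mem_filter] at hB ⊢
      exact ⟨(h B).1 hB.1, notMem_erase a B⟩
    · intro C hC
      rw [mem_filter] at hC ⊢
      exact ⟨(h _).2 (by rw [erase_insert hC.2]; exact hC.1), mem_insert_self a C⟩
    · intro B hB
      exact insert_erase (mem_filter.1 hB).2
    · intro C hC
      exact erase_insert (mem_filter.1 hC).2
    · intro B hB
      exact (weight_erase_mul (mem_filter.1 hB).2).symm
  have hsplit : prob p 𝒜 = prob p (𝒜.filter (a ∈ ·)) + prob p (𝒜.filter (a ∉ ·)) :=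
    (sum_filter_add_sum_filter_not 𝒜 _ _).symm
  rw [hsplit]
  linear_combination hpair

lemma prob_supersets_inter {𝒜 : Finset (Finset Ω)} {S : Finset Ω}
    (h : DeterminedOutside 𝒜 S) : prob p (supersets S ∩ 𝒜) = (∏ v ∈ S, p v) * prob p 𝒜 := by
  induction S using Finset.induction_on with
  | empty => simp [supersets]
  | insert a S ha ih =>
    have hsplit : supersets (insert a S) ∩ 𝒜 = (supersets S ∩ 𝒜).filter (a ∈ ·) := by
      ext B
      simp only [mem_inter, mem_filter, mem_supersets, insert_subset_iff]
      tauto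
    rw [hsplit, prob_filter_mem ((h.mono (by simp)).supersets_inter (by simpa using ha)),
      ih (h.mono (subset_insert a S)), prod_insert ha, mul_assoc]

lemma prob_supersets (S : Finset Ω) : prob p (supersets S) = ∏ v ∈ S, p v := by
  simpa [prob_univ] using prob_supersets_inter (p := p) (𝒜 := univ) (S := S) (fun B => by simp)

lemma prob_mul_prob_le_prob_inter_of_isLowerSet (hp0 : ∀ v, 0 ≤ p v) (hp1 : ∀ v, p v ≤ 1)
    {𝒜 ℬ : Finset (Finset Ω)} (h𝒜 : IsLowerSet (𝒜 : Set (Finset Ω)))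
    (hℬ : IsLowerSet (ℬ : Set (Finset Ω))) : prob p 𝒜 * prob p ℬ ≤ prob p (𝒜 ∩ ℬ) := by
  have hw : 0 ≤ weight p := fun B => weight_nonneg hp0 hp1 B
  have hinfs : 𝒜 ⊼ ℬ ⊆ 𝒜 ∩ ℬ := by
    simp only [infs_subset_iff, mem_inter]
    exact fun B hB C hC => ⟨h𝒜 inf_le_left hB, hℬ inf_le_right hC⟩
  calc prob p 𝒜 * prob p ℬ ≤ prob p (𝒜 ⊼ ℬ) * prob p (𝒜 ⊻ ℬ) :=
        four_functions_theorem _ _ _ _ hw hw hw hw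
          (fun B C => (weight_mul_weight B C).le) 𝒜 ℬ
    _ ≤ prob p (𝒜 ∩ ℬ) * 1 :=
        mul_le_mul (prob_mono hp0 hp1 hinfs) (prob_le_one hp0 hp1 _) (prob_nonneg hp0 hp1 _)
          (prob_nonneg hp0 hp1 _)
    _ = prob p (𝒜 ∩ ℬ) := mul_one _

lemma prob_inter_le_prob_mul_prob_of_isUpperSet (hp0 : ∀ v, 0 ≤ p v) (hp1 : ∀ v, p v ≤ 1)
    {𝒜 ℬ : Finset (Finset Ω)} (h𝒜 : IsUpperSet (𝒜 : Set (Finset Ω)))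
    (hℬ : IsLowerSet (ℬ : Set (Finset Ω))) : prob p (𝒜 ∩ ℬ) ≤ prob p 𝒜 * prob p ℬ := by
  have h := prob_mul_prob_le_prob_inter_of_isLowerSet hp0 hp1 (𝒜 := 𝒜ᶜ)
    (by simpa using h𝒜.compl) hℬ
  rw [prob_compl, prob_compl_inter] at h
  linarith

end Probability

section DependentPairs

variable [DecidableEq Ω] (p : Ω → ℝ) (A : ι → Finset Ω)

open scoped Classical in
noncomputable def dependentPairProb (i j : ι) : ℝ :=
  if i ≠ j ∧ (A i ∩ A j).Nonempty then ∏ v ∈ A i ∪ A j, p v else 0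

variable {p}

lemma dependentPairProb_nonneg (hp0 : ∀ v, 0 ≤ p v) (i j : ι) :
    0 ≤ dependentPairProb p A i j := by
  unfold dependentPairProb
  split_ifs
  exacts [prod_nonneg fun v _ => hp0 v, le_rfl]

lemma dependentPairProb_self (i : ι) : dependentPairProb p A i i = 0 := by
  simp [dependentPairProb]

lemma dependentPairProb_comm (i j : ι) :
    dependentPairProb p A i j = dependentPairProb p A j i := by
  rw [dependentPairProb, dependentPairProb, inter_comm, union_comm]
  classical
  exact if_congr (and_congr_left' ne_comm) rfl rfl

lemma sum_dependentPairProb_of_notMem {i : ι} {s : Finset ι} (hi : i ∉ s) :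
    ∑ j ∈ s, dependentPairProb p A i j =
      ∑ j ∈ s with (A i ∩ A j).Nonempty, ∏ v ∈ A i ∪ A j, p v := by
  rw [sum_filter]
  refine sum_congr rfl fun j hj => ?_
  have hij : i ≠ j := fun h => hi (h ▸ hj)
  simp [dependentPairProb, hij]

lemma sum_sum_dependentPairProb_insert [DecidableEq ι] {i : ι} {s : Finset ι} (hi : i ∉ s) :
    ∑ k ∈ insert i s, ∑ j ∈ insert i s, dependentPairProb p A k j =
      ∑ k ∈ s, ∑ j ∈ s, dependentPairProb p A k j + 2 * ∑ j ∈ s, dependentPairProb p A i j := by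
  simp only [sum_insert hi, sum_add_distrib, dependentPairProb_comm A _ i,
    dependentPairProb_self]
  ring

end DependentPairs

section Janson

variable [Fintype Ω] [DecidableEq Ω] {p : Ω → ℝ} (A : ι → Finset Ω)

def avoiding (s : Finset ι) : Finset (Finset Ω) :=
  univ.filter (fun B => ∀ i ∈ s, ¬ A i ⊆ B)

lemma mem_avoiding {s : Finset ι} {B : Finset Ω} :
    B ∈ avoiding A s ↔ ∀ i ∈ s, ¬ A i ⊆ B := by
  simp [avoiding]

lemma isLowerSet_avoiding (s : Finset ι) : IsLowerSet (avoiding A s : Set (Finset Ω)) :=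
  fun _ _ hCB hB => (mem_avoiding A).2 fun i hi h => (mem_avoiding A).1 hB i hi (h.trans hCB)

lemma avoiding_insert [DecidableEq ι] (i : ι) (s : Finset ι) :
    avoiding A (insert i s) = (supersets (A i))ᶜ ∩ avoiding A s := by
  ext B
  simp [mem_avoiding, mem_supersets]

lemma avoiding_mono {s t : Finset ι} (hst : s ⊆ t) : avoiding A t ⊆ avoiding A s :=
  fun _ hB => (mem_avoiding A).2 fun i hi => (mem_avoiding A).1 hB i (hst hi)

lemma determinedOutside_avoiding {s : Finset ι} {S : Finset Ω}
    (h : ∀ j ∈ s, Disjoint (A j) S) : DeterminedOutside (avoiding A s) S := fun B => by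
  simp only [mem_avoiding]
  exact forall₂_congr fun j hj => by simp [subset_sdiff, h j hj]

lemma supersets_inter_avoiding_subset (i : ι) (s : Finset ι) :
    supersets (A i) ∩ avoiding A (s.filter fun j => ¬ (A i ∩ A j).Nonempty) ⊆
      supersets (A i) ∩ avoiding A s ∪ (s.filter fun j => (A i ∩ A j).Nonempty).biUnion
        fun j => supersets (A i ∪ A j) ∩ avoiding A (s.filter fun j => ¬ (A i ∩ A j).Nonempty) := by
  intro B hB
  rw [mem_inter, mem_supersets] at hB
  by_cases hS : B ∈ avoiding A s
  · exact mem_union_left _ (mem_inter.2 ⟨mem_supersets.2 hB.1, hS⟩)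
  obtain ⟨j, hj, hjB⟩ : ∃ j ∈ s, A j ⊆ B := by simpa [mem_avoiding] using hS
  have hdep : (A i ∩ A j).Nonempty := by
    by_contra hindep
    exact (mem_avoiding A).1 hB.2 j (mem_filter.2 ⟨hj, hindep⟩) hjB
  exact mem_union_right _ (mem_biUnion.2 ⟨j, mem_filter.2 ⟨hj, hdep⟩,
    mem_inter.2 ⟨mem_supersets.2 (union_subset hB.1 hjB), hB.2⟩⟩)

lemma sub_mul_prob_avoiding_le (hp0 : ∀ v, 0 ≤ p v) (hp1 : ∀ v, p v ≤ 1) (i : ι)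
    (s : Finset ι) :
    (∏ v ∈ A i, p v - ∑ j ∈ s with (A i ∩ A j).Nonempty, ∏ v ∈ A i ∪ A j, p v) *
        prob p (avoiding A s) ≤ prob p (supersets (A i) ∩ avoiding A s) := by
  set D := s.filter fun j => (A i ∩ A j).Nonempty
  set E := avoiding A (s.filter fun j => ¬ (A i ∩ A j).Nonempty)
  set q := ∏ v ∈ A i, p v
  set δ := ∑ j ∈ D, ∏ v ∈ A i ∪ A j, p v
  have hindep : prob p (supersets (A i) ∩ E) = q * prob p E := by
    refine prob_supersets_inter (determinedOutside_avoiding A fun j hj => ?_)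
    rw [disjoint_comm, disjoint_iff_inter_eq_empty, ← not_nonempty_iff_eq_empty]
    exact (mem_filter.1 hj).2
  have hharris : ∀ j ∈ D, prob p (supersets (A i ∪ A j) ∩ E) ≤
      (∏ v ∈ A i ∪ A j, p v) * prob p E := fun j _ => by
    rw [← prob_supersets]
    exact prob_inter_le_prob_mul_prob_of_isUpperSet hp0 hp1 (isUpperSet_supersets _)
      (isLowerSet_avoiding A _)
  have hcover : q * prob p E ≤ prob p (supersets (A i) ∩ avoiding A s) + δ * prob p E :=
    calc q * prob p E = prob p (supersets (A i) ∩ E) := hindep.symm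
      _ ≤ prob p (supersets (A i) ∩ avoiding A s) +
          ∑ j ∈ D, prob p (supersets (A i ∪ A j) ∩ E) :=
        (prob_mono hp0 hp1 (supersets_inter_avoiding_subset A i s)).trans
          ((prob_union_le hp0 hp1 _ _).trans (add_le_add_right (prob_biUnion_le hp0 hp1 _ _) _))
      _ ≤ _ := by
        rw [sum_mul]
        exact add_le_add_right (sum_le_sum hharris) _
  rcases le_total δ q with h | h
  · calc (q - δ) * prob p (avoiding A s) ≤ (q - δ) * prob p E :=
          mul_le_mul_of_nonneg_left (prob_mono hp0 hp1 (avoiding_mono A (filter_subset _ _)))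
            (sub_nonneg.2 h)
      _ ≤ _ := by linarith
  · exact (mul_nonpos_of_nonpos_of_nonneg (sub_nonpos.2 h) (prob_nonneg hp0 hp1 _)).trans
      (prob_nonneg hp0 hp1 _)

lemma prob_avoiding_insert_le [DecidableEq ι] (hp0 : ∀ v, 0 ≤ p v) (hp1 : ∀ v, p v ≤ 1)
    (i : ι) (s : Finset ι) :
    prob p (avoiding A (insert i s)) ≤
      (1 - ∏ v ∈ A i, p v + ∑ j ∈ s with (A i ∩ A j).Nonempty, ∏ v ∈ A i ∪ A j, p v) *
        prob p (avoiding A s) := by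
  rw [avoiding_insert, prob_compl_inter]
  linarith [sub_mul_prob_avoiding_le A hp0 hp1 i s]

lemma prod_one_sub_le_prob_avoiding (hp0 : ∀ v, 0 ≤ p v) (hp1 : ∀ v, p v ≤ 1)
    (s : Finset ι) : ∏ i ∈ s, (1 - ∏ v ∈ A i, p v) ≤ prob p (avoiding A s) := by
  classical
  induction s using Finset.induction_on with
  | empty => simp [avoiding, prob_univ]
  | insert i s hi ih =>
    rw [prod_insert hi, avoiding_insert, ← prob_supersets (p := p), ← prob_compl]
    exact (mul_le_mul_of_nonneg_left ih (prob_nonneg hp0 hp1 _)).trans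
      (prob_mul_prob_le_prob_inter_of_isLowerSet hp0 hp1
        (by simpa using (isUpperSet_supersets (A i)).compl) (isLowerSet_avoiding A s))

lemma prob_avoiding_le (hp0 : ∀ v, 0 ≤ p v) (hp1 : ∀ v, p v ≤ 1) {ε : ℝ} (hε1 : ε < 1)
    (s : Finset ι) (hs : ∀ i ∈ s, ∏ v ∈ A i, p v ≤ ε) :
    prob p (avoiding A s) ≤ (∏ i ∈ s, (1 - ∏ v ∈ A i, p v)) *
      Real.exp ((∑ i ∈ s, ∑ j ∈ s, dependentPairProb p A i j) / (2 * (1 - ε))) := by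
  classical
  induction s using Finset.induction_on with
  | empty => simp [avoiding, prob_univ]
  | insert i s hi ih =>
    rw [forall_mem_insert] at hs
    set q := ∏ v ∈ A i, p v
    set δ := ∑ j ∈ s, dependentPairProb p A i j with hδ_eq
    have hδ : 0 ≤ δ := sum_nonneg fun j _ => dependentPairProb_nonneg A hp0 i j
    calc prob p (avoiding A (insert i s)) ≤ (1 - q + δ) * prob p (avoiding A s) := by
          rw [hδ_eq, sum_dependentPairProb_of_notMem A hi]
          exact prob_avoiding_insert_le A hp0 hp1 i s
      _ ≤ ((1 - q) * Real.exp (δ / (1 - ε))) * ((∏ k ∈ s, (1 - ∏ v ∈ A k, p v)) *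
            Real.exp ((∑ k ∈ s, ∑ j ∈ s, dependentPairProb p A k j) / (2 * (1 - ε)))) :=
          mul_le_mul (one_sub_add_le_mul_exp hs.1 hε1 hδ) (ih hs.2) (prob_nonneg hp0 hp1 _)
            (mul_nonneg (by linarith [hs.1]) (Real.exp_pos _).le)
      _ = _ := by
          rw [prod_insert hi, sum_sum_dependentPairProb_insert A hi, mul_mul_mul_comm,
            ← Real.exp_add]
          have : 1 - ε ≠ 0 := by linarith
          congr 2
          field_simp
          ring

end Janson

end RandomSubset

open scoped Classical in
/-- Janson's inequality.  Each element `v` of the finite ground set `Ω` is included in a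
random subset `R` independently with probability `p v`; `A i ⊆ Ω` are fixed subsets and
`𝒜ᵢ` is the event `A i ⊆ R`, so `P(𝒜ᵢ) = ∏_{v ∈ A i} p v ≤ ε < 1`.  With
`Δ* = Σ_{i ∼ j} P(𝒜ᵢ ∧ 𝒜ⱼ)` over ordered pairs of dependent events and
`M = Π_i P(¬𝒜ᵢ)`, we have `M ≤ P(∧ᵢ ¬𝒜ᵢ) ≤ M·exp(Δ*/(2(1−ε)))`. -/
theorem janson_inequality {Ω ι : Type*} [Fintype Ω] [DecidableEq Ω]
    (p : Ω → ℝ) (hp0 : ∀ v, 0 ≤ p v) (hp1 : ∀ v, p v ≤ 1)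
    (I : Finset ι) (A : ι → Finset Ω)
    (ε : ℝ) (hε1 : ε < 1)
    (hPr : ∀ i ∈ I, ∏ v ∈ A i, p v ≤ ε) :
    (∏ i ∈ I, (1 - ∏ v ∈ A i, p v)) ≤
        ∑ B ∈ (Finset.univ : Finset (Finset Ω)).filter
            (fun B => ∀ i ∈ I, ¬ A i ⊆ B),
          (∏ v ∈ B, p v) * ∏ v ∈ Bᶜ, (1 - p v) ∧
      (∑ B ∈ (Finset.univ : Finset (Finset Ω)).filter
            (fun B => ∀ i ∈ I, ¬ A i ⊆ B),
          (∏ v ∈ B, p v) * ∏ v ∈ Bᶜ, (1 - p v)) ≤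
        (∏ i ∈ I, (1 - ∏ v ∈ A i, p v)) *
          Real.exp ((∑ i ∈ I, ∑ j ∈ I,
              if i ≠ j ∧ (A i ∩ A j).Nonempty then ∏ v ∈ A i ∪ A j, p v else 0) /
            (2 * (1 - ε))) :=
  ⟨RandomSubset.prod_one_sub_le_prob_avoiding A hp0 hp1 I,
    RandomSubset.prob_avoiding_le A hp0 hp1 hε1 I hPr⟩
end

section
/- Let N be a finite set and choose a random subset by including each element i independently with probability p_i. If 𝒜 is a monotone increasing family of subsets of N and 𝒞 is a monotone decreasing family of subsets of N, then P(𝒜 ∩ 𝒞) ≤ P(𝒜)·P(𝒞). -/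
/-!
The product Bernoulli weight satisfies `μ A * μ B = μ (A ∩ B) * μ (A ∪ B)`, since every element
contributes the same factor to both sides. So the FKG inequality applies to it, and for the
indicator functions of two upper sets it says that upper sets are positively correlated. The
complement of the decreasing family `𝒞` is an upper set, and positive correlation of `𝒜` with
`𝒞ᶜ` is negative correlation of `𝒜` with `𝒞`.
-/

open Finset

section Harris

variable {α β : Type*} [DistribLattice α] [DecidableEq α]
  [CommRing β] [LinearOrder β] [IsStrictOrderedRing β]

lemma monotone_ite_mem_of_isUpperSet {s : Finset α} (hs : IsUpperSet (s : Set α)) :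
    Monotone fun a ↦ if a ∈ s then (1 : β) else 0 := by
  intro a b hab
  by_cases ha : a ∈ s
  · simp [ha, mem_coe.1 (hs hab ha)]
  · simp only [ha, if_false]
    split_ifs <;> norm_num

variable [Fintype α] {μ : α → β} {s t : Finset α}

/-- **Harris inequality**, for a log-supermodular weight. -/
lemma sum_mul_sum_le_sum_mul_sum_inter (hμ₀ : 0 ≤ μ)
    (hμ : ∀ a b, μ a * μ b ≤ μ (a ⊓ b) * μ (a ⊔ b))
    (hs : IsUpperSet (s : Set α)) (ht : IsUpperSet (t : Set α)) :
    (∑ a ∈ s, μ a) * ∑ a ∈ t, μ a ≤ (∑ a, μ a) * ∑ a ∈ s ∩ t, μ a := by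
  have h := fkg _ _ μ hμ₀ (fun a ↦ by dsimp; split_ifs <;> norm_num)
    (fun a ↦ by dsimp; split_ifs <;> norm_num)
    (monotone_ite_mem_of_isUpperSet (β := β) hs) (monotone_ite_mem_of_isUpperSet ht) hμ
  simp only [mul_ite, mul_one, mul_zero, sum_ite_mem, univ_inter] at h
  rwa [inter_comm t] at h

lemma sum_mul_sum_inter_le_sum_mul_sum (hμ₀ : 0 ≤ μ)
    (hμ : ∀ a b, μ a * μ b ≤ μ (a ⊓ b) * μ (a ⊔ b))
    (hs : IsUpperSet (s : Set α)) (ht : IsLowerSet (t : Set α)) :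
    (∑ a, μ a) * ∑ a ∈ s ∩ t, μ a ≤ (∑ a ∈ s, μ a) * ∑ a ∈ t, μ a := by
  have h := sum_mul_sum_le_sum_mul_sum_inter hμ₀ hμ hs (t := tᶜ) (by simpa using ht.compl)
  rw [← sdiff_eq_inter_compl, ← sum_inter_add_sum_sdiff s t, ← sum_compl_add_sum t] at h
  rw [← sum_compl_add_sum t, ← sum_inter_add_sum_sdiff s t]
  linarith

end Harris

section BernoulliWeight

variable {N R : Type*} [Fintype N] [DecidableEq N] [CommRing R]

def bernoulliWeight (p : N → R) (B : Finset N) : R :=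
  (∏ i ∈ B, p i) * ∏ j ∈ Bᶜ, (1 - p j)

lemma sum_bernoulliWeight (p : N → R) : ∑ B, bernoulliWeight p B = 1 := by
  simp [bernoulliWeight, ← Fintype.prod_add]

lemma bernoulliWeight_mul_bernoulliWeight (p : N → R) (A B : Finset N) :
    bernoulliWeight p A * bernoulliWeight p B =
      bernoulliWeight p (A ∩ B) * bernoulliWeight p (A ∪ B) := by
  simp only [bernoulliWeight, compl_inter, compl_union]
  rw [mul_mul_mul_comm, ← prod_union_inter, ← prod_union_inter (s₁ := Aᶜ)]
  ring

lemma bernoulliWeight_nonneg [LinearOrder R] [IsStrictOrderedRing R] {p : N → R}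
    (hp0 : ∀ i, 0 ≤ p i) (hp1 : ∀ i, p i ≤ 1) (B : Finset N) : 0 ≤ bernoulliWeight p B :=
  mul_nonneg (prod_nonneg fun i _ ↦ hp0 i) (prod_nonneg fun j _ ↦ sub_nonneg.2 (hp1 j))

end BernoulliWeight

/-- Harris/FKG negative-correlation inequality: under the product Bernoulli measure on
subsets of a finite set `N` (element `i` included independently with probability `p i`),
if `𝒜` is a monotone increasing family and `𝒞` a monotone decreasing family, then
`P(𝒜 ∩ 𝒞) ≤ P(𝒜)·P(𝒞)`. -/
theorem increasing_decreasing_neg_corr {N : Type*} [Fintype N] [DecidableEq N]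
    (p : N → ℝ) (hp0 : ∀ i, 0 ≤ p i) (hp1 : ∀ i, p i ≤ 1)
    (𝒜 𝒞 : Finset (Finset N))
    (hinc : ∀ A ∈ 𝒜, ∀ A' : Finset N, A ⊆ A' → A' ∈ 𝒜)
    (hdec : ∀ C ∈ 𝒞, ∀ C' : Finset N, C' ⊆ C → C' ∈ 𝒞) :
    (∑ B ∈ 𝒜 ∩ 𝒞, (∏ i ∈ B, p i) * ∏ j ∈ Bᶜ, (1 - p j)) ≤
      (∑ B ∈ 𝒜, (∏ i ∈ B, p i) * ∏ j ∈ Bᶜ, (1 - p j)) *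
        (∑ B ∈ 𝒞, (∏ i ∈ B, p i) * ∏ j ∈ Bᶜ, (1 - p j)) := by
  have h := sum_mul_sum_inter_le_sum_mul_sum (bernoulliWeight_nonneg hp0 hp1)
    (fun A B ↦ (bernoulliWeight_mul_bernoulliWeight p A B).le)
    (fun A _ hAA' hA ↦ hinc A hA _ hAA') (fun C _ hCC' hC ↦ hdec C hC _ hCC')
  rwa [sum_bernoulliWeight, one_mul] at h
end
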